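/- Let 1 < mu < (1 + sqrt(5))/2 and let T_mu(x) = 1 - mu |x|. Then T_mu has no periodic point of minimal period 3: there is no x in R with T_mu^[3](x) = x, T_mu(x) != x and T_mu^[2](x) != x. Hence mu3 = (1 + sqrt(5))/2 is the smallest parameter in (1, 2] at which the tent family has a period-three orbit. -/

import Mathlib

/-!
On each half-line the tent map is affine with slope `∓μ`, so it multiplies the distance between
two points on the same side of `0` by `μ > 1`. A period-three orbit that changes sign must pass
from `[0, ∞)` to `(-∞, 0]`; following the three affine branches around the orbit then forces
`x (μ³ - 1) = μ² - μ - 1` for some `x > 0`, impossible once `μ² < μ + 1`, i.e. `μ < φ`.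
Hence the orbit stays on one side of `0`, where the map expands distances by `μ`, and an expanding
periodic orbit is a fixed point.
-/

open Function Real

def tent (μ x : ℝ) : ℝ := 1 - μ * |x|

theorem Function.IsPeriodicPt.isFixedPt_of_dist_iterate_succ {α : Type*} [MetricSpace α]
    {f : α → α} {n : ℕ} {x : α} {μ : ℝ} (hμ : 1 < μ) (hn : n ≠ 0) (hx : IsPeriodicPt f n x)
    (hf : ∀ k, dist (f^[k + 1] x) (f^[k + 2] x) = μ * dist (f^[k] x) (f^[k + 1] x)) :
    IsFixedPt f x := by
  have hk : ∀ k, dist (f^[k] x) (f^[k + 1] x) = μ ^ k * dist x (f x) := by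
    intro k
    induction k with
    | zero => simp
    | succ k ih => rw [hf, ih, pow_succ]; ring
  have hd := hk n
  rw [iterate_succ_apply', hx.eq] at hd
  have : dist x (f x) = 0 := by
    nlinarith [one_lt_pow₀ hμ hn, dist_nonneg (x := x) (y := f x)]
  exact (dist_eq_zero.1 this).symm

namespace Real

theorem sq_lt_add_one_of_lt_goldenRatio {μ : ℝ} (hμ : 0 ≤ μ) (h : μ < goldenRatio) :
    μ ^ 2 < μ + 1 := by
  nlinarith [goldenRatio_mul_goldenConj, goldenRatio_add_goldenConj, goldenConj_neg]

end Real

namespace tent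

variable {μ : ℝ}

theorem le_one (hμ : 0 ≤ μ) (x : ℝ) : tent μ x ≤ 1 :=
  sub_le_self _ (mul_nonneg hμ (abs_nonneg x))

theorem apply_of_nonneg {x : ℝ} (hx : 0 ≤ x) : tent μ x = 1 - μ * x := by
  rw [tent, abs_of_nonneg hx]

theorem apply_of_nonpos {x : ℝ} (hx : x ≤ 0) : tent μ x = 1 + μ * x := by
  rw [tent, abs_of_nonpos hx]
  ring

theorem dist_eq (hμ : 0 ≤ μ) {a b : ℝ} (hab : 0 ≤ a * b) :
    dist (tent μ a) (tent μ b) = μ * dist a b := by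
  have habs : |(|b| - |a|)| = |a - b| := by
    have hprod : |a| * |b| = a * b := by rw [← abs_mul, abs_of_nonneg hab]
    rw [← sq_eq_sq_iff_abs_eq_abs]
    linear_combination (-2) * hprod + sq_abs a + sq_abs b
  rw [Real.dist_eq, Real.dist_eq, tent, tent,
    show 1 - μ * |a| - (1 - μ * |b|) = μ * (|b| - |a|) by ring, abs_mul, abs_of_nonneg hμ, habs]

theorem pos_of_nonneg_of_isPeriodicPt_three (hμ : 1 < μ) (hφ : μ ^ 2 < μ + 1) {a : ℝ}
    (ha : IsPeriodicPt (tent μ) 3 a) (h0 : 0 ≤ a) : 0 < tent μ a := by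
  by_contra! hz
  set z := tent μ a
  set x := tent μ z
  have hxa : tent μ x = a := ha
  have hz_eq : z = 1 - μ * a := apply_of_nonneg h0
  have hx_eq : x = 1 + μ * z := apply_of_nonpos hz
  have hx : 0 < x := by
    have : a ≤ 1 := hxa ▸ le_one (by linarith) x
    nlinarith
  have ha_eq : a = 1 - μ * x := hxa ▸ apply_of_nonneg hx.le
  have hcycle : x * (μ ^ 3 - 1) = μ ^ 2 - μ - 1 := by
    linear_combination -hx_eq - μ * hz_eq + μ ^ 2 * ha_eq
  nlinarith [one_lt_pow₀ hμ three_ne_zero]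

theorem iterate_nonneg_of_isPeriodicPt_three (hμ : 1 < μ) (hφ : μ ^ 2 < μ + 1) {a : ℝ}
    (ha : IsPeriodicPt (tent μ) 3 a) (h0 : 0 ≤ a) (n : ℕ) : 0 ≤ (tent μ)^[n] a := by
  induction n with
  | zero => exact h0
  | succ n ih =>
    rw [iterate_succ_apply']
    exact (pos_of_nonneg_of_isPeriodicPt_three hμ hφ (ha.apply_iterate n) ih).le

theorem iterate_nonneg_or_nonpos_of_isPeriodicPt_three (hμ : 1 < μ) (hφ : μ ^ 2 < μ + 1)
    {x : ℝ} (hx : IsPeriodicPt (tent μ) 3 x) :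
    (∀ n, 0 ≤ (tent μ)^[n] x) ∨ ∀ n, (tent μ)^[n] x ≤ 0 := by
  by_cases h : ∃ m, 0 ≤ (tent μ)^[m] x
  · obtain ⟨m, hm⟩ := h
    refine Or.inl fun n => ?_
    have hback : (tent μ)^[n + 2 * m] ((tent μ)^[m] x) = (tent μ)^[n] x := by
      rw [← iterate_add_apply, show n + 2 * m + m = n + 3 * m by ring, iterate_add_apply,
        (hx.mul_const m).eq]
    exact hback ▸ iterate_nonneg_of_isPeriodicPt_three hμ hφ (hx.apply_iterate m) hm _
  · push Not at h
    exact Or.inr fun n => (h n).le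

theorem isFixedPt_of_isPeriodicPt_three (hμ : 1 < μ) (hφ : μ ^ 2 < μ + 1) {x : ℝ}
    (hx : IsPeriodicPt (tent μ) 3 x) : IsFixedPt (tent μ) x := by
  refine hx.isFixedPt_of_dist_iterate_succ hμ three_ne_zero fun k => ?_
  have hab : 0 ≤ (tent μ)^[k] x * tent μ ((tent μ)^[k] x) := by
    rw [← iterate_succ_apply' (tent μ)]
    rcases iterate_nonneg_or_nonpos_of_isPeriodicPt_three hμ hφ hx with h | h
    · exact mul_nonneg (h k) (h (k + 1))
    · exact mul_nonneg_of_nonpos_of_nonpos (h k) (h (k + 1))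
  rw [iterate_succ_apply' _ (k + 1), iterate_succ_apply' _ k]
  exact dist_eq (by linarith) hab

end tent

/-- For `1 < μ < (1 + √5)/2`, the tent map `T_μ x = 1 - μ|x|` has no periodic point of
minimal period 3. Hence `μ₃ = (1 + √5)/2` is the smallest parameter in `(1, 2]` at which
the tent family has a period-three orbit. -/
theorem stmt_16 (μ : ℝ) (hμ1 : 1 < μ) (hμ2 : μ < (1 + Real.sqrt 5) / 2)
    (T : ℝ → ℝ) (hT : ∀ x, T x = 1 - μ * |x|) :
    ¬ ∃ x : ℝ, T^[3] x = x ∧ T x ≠ x ∧ T^[2] x ≠ x := by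
  obtain rfl : T = tent μ := funext hT
  rintro ⟨x, hx3, hx1, -⟩
  exact hx1 <| tent.isFixedPt_of_isPeriodicPt_three hμ1
    (sq_lt_add_one_of_lt_goldenRatio (by linarith) hμ2) hx3
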